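/- Let D be a connected digraph with at least one arc. Then: (i) ⟨D⟩ has a left zero if and only if every terminal component of D is trivial; moreover, in that case α∈⟨D⟩ is a left zero if and only if vα belongs to a terminal component for every vertex v. (ii) ⟨D⟩ has a right zero if and only if D has exactly one terminal component; moreover, in that case α∈⟨D⟩ is a right zero if and only if α is a constant map. (iii) ⟨D⟩ has a zero if and only if D has exactly one terminal component and that component is trivial; in that case the zero is the constant map onto the single vertex of that terminal component. -/

import Mathlib

/-- The transformation of `{1,…,n}` sending `a` to `b` and fixing all other points. -/
def arcT {n : ℕ} (a b : Fin n) : Fin n → Fin n := fun v => if v = a then b else v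

/-- The semigroup `⟨D⟩` generated by the arcs of the digraph `D`; transformations act on
the right, so a product `ε₁ε₂⋯ε_k` is the function `ε_k ∘ ⋯ ∘ ε₁`. -/
def genSg {n : ℕ} (D : Set (Fin n × Fin n)) : Set (Fin n → Fin n) :=
  { α | ∃ l : List (Fin n × Fin n), l ≠ [] ∧ (∀ p ∈ l, p ∈ D) ∧
      α = l.foldl (fun f p => arcT p.1 p.2 ∘ f) id }

/-- The product `x·y` in the right-action convention: apply `x` first, then `y`. -/
def sgMul {n : ℕ} (x y : Fin n → Fin n) : Fin n → Fin n := y ∘ x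

/-- The right ideal `xS¹ = {x} ∪ xS`. -/
def rIdeal {n : ℕ} (S : Set (Fin n → Fin n)) (x : Fin n → Fin n) : Set (Fin n → Fin n) :=
  insert x { y | ∃ s ∈ S, y = sgMul x s }

/-- The left ideal `S¹x = {x} ∪ Sx`. -/
def lIdeal {n : ℕ} (S : Set (Fin n → Fin n)) (x : Fin n → Fin n) : Set (Fin n → Fin n) :=
  insert x { y | ∃ s ∈ S, y = sgMul s x }

/-- The two-sided ideal `S¹xS¹`. -/
def jIdeal {n : ℕ} (S : Set (Fin n → Fin n)) (x : Fin n → Fin n) : Set (Fin n → Fin n) :=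
  { y | ∃ s ∈ insert id S, ∃ t ∈ insert id S, y = sgMul s (sgMul x t) }

def RRel {n : ℕ} (S : Set (Fin n → Fin n)) (x y : Fin n → Fin n) : Prop :=
  rIdeal S x = rIdeal S y

def LRel {n : ℕ} (S : Set (Fin n → Fin n)) (x y : Fin n → Fin n) : Prop :=
  lIdeal S x = lIdeal S y

def JRel {n : ℕ} (S : Set (Fin n → Fin n)) (x y : Fin n → Fin n) : Prop :=
  jIdeal S x = jIdeal S y

def RTrivial {n : ℕ} (S : Set (Fin n → Fin n)) : Prop :=
  ∀ x ∈ S, ∀ y ∈ S, RRel S x y → x = y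

def LTrivial {n : ℕ} (S : Set (Fin n → Fin n)) : Prop :=
  ∀ x ∈ S, ∀ y ∈ S, LRel S x y → x = y

def HTrivial {n : ℕ} (S : Set (Fin n → Fin n)) : Prop :=
  ∀ x ∈ S, ∀ y ∈ S, RRel S x y → LRel S x y → x = y

def JTrivial {n : ℕ} (S : Set (Fin n → Fin n)) : Prop :=
  ∀ x ∈ S, ∀ y ∈ S, JRel S x y → x = y

/-- `α` has a cycle of length `k`: `k` distinct points `a₀,…,a_{k-1}` with
`α(aᵢ) = a_{i+1 mod k}`. -/
def IsCycleOf {n : ℕ} (α : Fin n → Fin n) (k : ℕ) : Prop :=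
  0 < k ∧ ∃ a : ZMod k → Fin n, Function.Injective a ∧ ∀ i, α (a i) = a (i + 1)

/-- `l(D)`: the maximal length of a cycle of an element of `⟨D⟩`. -/
noncomputable def lD {n : ℕ} (D : Set (Fin n × Fin n)) : ℕ :=
  sSup { k | ∃ α ∈ genSg D, IsCycleOf α k }

/-- The arc set of a graph. -/
def arcsOf {n : ℕ} (G : SimpleGraph (Fin n)) : Set (Fin n × Fin n) :=
  { p | G.Adj p.1 p.2 }

/-- `l(G)` for a graph `G`. -/
noncomputable def lG {n : ℕ} (G : SimpleGraph (Fin n)) : ℕ := lD (arcsOf G)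

/-- Reachability along directed walks of `D`. -/
def dreach {n : ℕ} (D : Set (Fin n × Fin n)) : Fin n → Fin n → Prop :=
  Relation.ReflTransGen (fun a b => (a, b) ∈ D)

/-- The strong component of the vertex `v`. -/
def strongComp {n : ℕ} (D : Set (Fin n × Fin n)) (v : Fin n) : Set (Fin n) :=
  { u | dreach D u v ∧ dreach D v u }

/-- The underlying graph of the digraph `D`. -/
def underlying {n : ℕ} (D : Set (Fin n × Fin n)) : SimpleGraph (Fin n) where
  Adj a b := a ≠ b ∧ ((a, b) ∈ D ∨ (b, a) ∈ D)
  symm := ⟨fun a b h => ⟨h.1.symm, h.2.symm⟩⟩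
  loopless := ⟨fun a h => h.1 rfl⟩

/-- `v 0, v 1, …, v r` is a cycle of the digraph `D`. -/
def IsDCycle {n : ℕ} (D : Set (Fin n × Fin n)) (r : ℕ) (v : ℕ → Fin n) : Prop :=
  1 ≤ r ∧ v r = v 0 ∧ (∀ i < r, ∀ j < r, v i = v j → i = j) ∧
    ∀ i < r, (v i, v (i + 1)) ∈ D

def HasDCycle {n : ℕ} (D : Set (Fin n × Fin n)) : Prop := ∃ r v, IsDCycle D r v

def DAcyclic {n : ℕ} (D : Set (Fin n × Fin n)) : Prop := ¬ HasDCycle D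

/-- `G` is a subgroup contained in the transformation semigroup `S`. -/
def IsSubgroupIn {n : ℕ} (S G : Set (Fin n → Fin n)) : Prop :=
  G ⊆ S ∧ (∀ x ∈ G, ∀ y ∈ G, sgMul x y ∈ G) ∧
    ∃ e ∈ G, (∀ x ∈ G, sgMul e x = x ∧ sgMul x e = x) ∧
      ∀ x ∈ G, ∃ y ∈ G, sgMul x y = e ∧ sgMul y x = e

/-- Every subgroup of `S` is trivial. -/
def SgAperiodic {n : ℕ} (S : Set (Fin n → Fin n)) : Prop :=
  ∀ G, IsSubgroupIn S G → G.Subsingleton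

/-- `C` is a terminal (strong) component of `D`: a strong component with no arc
leaving it. -/
def IsTerminal {n : ℕ} (D : Set (Fin n × Fin n)) (C : Set (Fin n)) : Prop :=
  (∃ v, C = strongComp D v) ∧ ∀ u ∈ C, ∀ w, (u, w) ∈ D → w ∈ C

/-- `a` is a left zero of `S`. -/
def IsLeftZero {n : ℕ} (S : Set (Fin n → Fin n)) (a : Fin n → Fin n) : Prop :=
  ∀ b ∈ S, sgMul a b = a

/-- `a` is a right zero of `S`. -/
def IsRightZero {n : ℕ} (S : Set (Fin n → Fin n)) (a : Fin n → Fin n) : Prop :=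
  ∀ b ∈ S, sgMul b a = a

/-! Every element of `⟨D⟩` moves each vertex along a directed walk, so it fixes every sink and
keeps every terminal component invariant. Conversely, composing with the arcs of a walk from `u`
to `z` sends the images equal to `u` to `z` and moves no other image except onto `z`; hence if every
vertex reaches a set `T`, some element of `⟨D⟩` maps all vertices into `T`. A left zero is then
exactly a map whose values are sinks, and a right zero is exactly a constant map (being invariant
under each arc it is constant along the edges of the connected underlying graph). The existence
statements follow by taking for `T` the set of sinks, or a vertex of the unique terminal
component. -/

section

variable {n : ℕ} {D : Set (Fin n × Fin n)}

lemma arcT_mem_genSg {a b : Fin n} (h : (a, b) ∈ D) : arcT a b ∈ genSg D :=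
  ⟨[(a, b)], by simp, by simp [h], rfl⟩

lemma arcT_comp_mem_genSg {α : Fin n → Fin n} (hα : α ∈ genSg D) {a b : Fin n}
    (h : (a, b) ∈ D) : arcT a b ∘ α ∈ genSg D := by
  obtain ⟨l, hl, hlD, rfl⟩ := hα
  refine ⟨l ++ [(a, b)], by simp, fun p hp => ?_, by simp⟩
  rcases List.mem_append.1 hp with hp | hp
  · exact hlD p hp
  · rwa [List.mem_singleton.1 hp]

lemma dreach_arcT {a b : Fin n} (h : (a, b) ∈ D) (v : Fin n) : dreach D v (arcT a b v) := by
  unfold arcT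
  split_ifs with hv
  · exact .single (hv ▸ h)
  · exact .refl

lemma genSg_induction {P : (Fin n → Fin n) → Prop}
    (arc : ∀ a b, (a, b) ∈ D → P (arcT a b))
    (step : ∀ α a b, P α → (a, b) ∈ D → P (arcT a b ∘ α)) : ∀ α ∈ genSg D, P α := by
  rintro _ ⟨l, hl, hlD, rfl⟩
  induction l using List.reverseRecOn with
  | nil => exact absurd rfl hl
  | append_singleton l p ih =>
    have hp : (p.1, p.2) ∈ D := hlD p (by simp)
    rcases eq_or_ne l [] with rfl | hl'
    · exact arc _ _ hp
    · rw [List.foldl_append]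
      exact step _ _ _ (ih hl' fun q hq => hlD q (by simp [hq])) hp

lemma dreach_apply {α : Fin n → Fin n} (hα : α ∈ genSg D) (v : Fin n) : dreach D v (α v) :=
  genSg_induction (P := fun α => ∀ v, dreach D v (α v)) (fun _ _ h => dreach_arcT h)
    (fun _ _ _ hα h v => (hα v).trans (dreach_arcT h _)) α hα v

def IsSink (D : Set (Fin n × Fin n)) (u : Fin n) : Prop := ∀ w, (u, w) ∉ D

lemma IsSink.eq_of_dreach {x z : Fin n} (hx : IsSink D x) (h : dreach D x z) : z = x :=
  (Relation.reflTransGen_iff_eq (r := fun a b => (a, b) ∈ D) hx).1 h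

lemma IsSink.apply_eq {x : Fin n} (hx : IsSink D x) {α : Fin n → Fin n} (hα : α ∈ genSg D) :
    α x = x :=
  hx.eq_of_dreach (dreach_apply hα x)

lemma mem_strongComp_self (v : Fin n) : v ∈ strongComp D v := ⟨.refl, .refl⟩

lemma strongComp_eq_of_mem {u v : Fin n} (h : u ∈ strongComp D v) :
    strongComp D u = strongComp D v := by
  obtain ⟨huv, hvu⟩ := h
  ext w
  exact ⟨fun ⟨h1, h2⟩ => ⟨h1.trans huv, hvu.trans h2⟩,
    fun ⟨h1, h2⟩ => ⟨h1.trans hvu, huv.trans h2⟩⟩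

lemma IsSink.strongComp_eq {x : Fin n} (hx : IsSink D x) : strongComp D x = {x} :=
  Set.eq_singleton_iff_unique_mem.2 ⟨mem_strongComp_self x, fun _ h => hx.eq_of_dreach h.2⟩

lemma isTerminal_singleton_iff (hloop : ∀ u : Fin n, (u, u) ∉ D) {x : Fin n} :
    IsTerminal D {x} ↔ IsSink D x := by
  refine ⟨fun hx w hw => ?_, fun hx => ⟨⟨x, hx.strongComp_eq.symm⟩, ?_⟩⟩
  · obtain rfl : w = x := hx.2 x rfl w hw
    exact hloop w hw
  · rintro u rfl w hw
    exact absurd hw (hx w)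

lemma IsTerminal.mem_of_dreach {C : Set (Fin n)} (hC : IsTerminal D C) {u z : Fin n}
    (hu : u ∈ C) (h : dreach D u z) : z ∈ C := by
  induction h with
  | refl => exact hu
  | tail _ hyz ih => exact hC.2 _ ih _ hyz

lemma IsTerminal.eq_strongComp {C : Set (Fin n)} (hC : IsTerminal D C) {u : Fin n}
    (hu : u ∈ C) : C = strongComp D u := by
  obtain ⟨v, rfl⟩ := hC.1
  exact (strongComp_eq_of_mem hu).symm

/-- A vertex `x` reachable from `v` with the fewest reachable vertices lies in a terminal
component: anything reachable from `x` reaches no fewer vertices, hence reaches `x` back. -/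
lemma exists_dreach_isTerminal (v : Fin n) :
    ∃ x, dreach D v x ∧ IsTerminal D (strongComp D x) := by
  obtain ⟨x, hvx, hmin⟩ := Set.exists_min_image {w | dreach D v w}
    (fun w => {z | dreach D w z}.ncard) (Set.toFinite _) ⟨v, .refl⟩
  refine ⟨x, hvx, ⟨x, rfl⟩, fun u hu w huw => ⟨?_, hu.2.tail huw⟩⟩
  have hxw : dreach D x w := hu.2.tail huw
  have hsub : {z | dreach D w z} ⊆ {z | dreach D x z} := fun z hz => hxw.trans hz
  have heq := Set.eq_of_subset_of_ncard_le hsub (hmin w (hvx.trans hxw))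
  exact (Set.ext_iff.1 heq x).2 .refl


lemma exists_mem_genSg_push {α : Fin n → Fin n} (hα : α ∈ genSg D) {u z : Fin n}
    (h : dreach D u z) :
    ∃ β ∈ genSg D, ∀ v, (α v = u → β v = z) ∧ (β v = α v ∨ β v = z) := by
  induction h using Relation.ReflTransGen.head_induction_on generalizing α with
  | refl => exact ⟨α, hα, fun v => ⟨id, .inl rfl⟩⟩
  | @head u w huw _ ih =>
    obtain ⟨β, hβ, hβz⟩ := ih (arcT_comp_mem_genSg hα huw)
    refine ⟨β, hβ, fun v => ?_⟩
    by_cases hv : α v = u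
    · have hβv := (hβz v).1 (by simp [arcT, hv])
      exact ⟨fun _ => hβv, .inr hβv⟩
    · have hαv : (arcT u w ∘ α) v = α v := by simp [arcT, hv]
      exact ⟨fun h => absurd h hv, hαv ▸ (hβz v).2⟩

lemma exists_mem_genSg_forall_mem (hne : D.Nonempty) {T : Set (Fin n)}
    (hT : ∀ u, ∃ z ∈ T, dreach D u z) : ∃ α ∈ genSg D, ∀ v, α v ∈ T := by
  obtain ⟨⟨a, b⟩, hab⟩ := hne
  obtain ⟨α, hα, hmin⟩ := Set.exists_min_image (genSg D) (fun α => {v | α v ∉ T}.ncard)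
    (Set.toFinite _) ⟨_, arcT_mem_genSg hab⟩
  refine ⟨α, hα, fun v => by_contra fun hv => ?_⟩
  obtain ⟨z, hzT, hz⟩ := hT (α v)
  obtain ⟨β, hβ, hβz⟩ := exists_mem_genSg_push hα hz
  have hlt : {w | β w ∉ T} ⊂ {w | α w ∉ T} := by
    refine Set.ssubset_iff_of_subset (fun w hw => ?_) |>.2 ⟨v, hv, ?_⟩
    · rcases (hβz w).2 with h | h
      · exact fun hαw => hw (h ▸ hαw)
      · exact absurd (h ▸ hzT) hw
    · simpa [(hβz v).1 rfl] using hzT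
  exact (Set.ncard_lt_ncard hlt).not_ge (hmin β hβ)

lemma const_mem_genSg (hne : D.Nonempty) {t : Fin n}
    (ht : ∀ C, IsTerminal D C → t ∈ C) : (fun _ => t) ∈ genSg D := by
  obtain ⟨α, hα, hαt⟩ := exists_mem_genSg_forall_mem hne (T := {t}) fun u => by
    obtain ⟨x, hux, hx⟩ := exists_dreach_isTerminal (D := D) u
    exact ⟨t, rfl, hux.trans (ht _ hx).2⟩
  exact funext hαt ▸ hα

lemma IsTerminal.eq_strongComp_of_const_mem {t : Fin n} (ht : (fun _ => t) ∈ genSg D)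
    {C : Set (Fin n)} (hC : IsTerminal D C) : C = strongComp D t := by
  obtain ⟨v, hv⟩ := hC.1
  have hvC : v ∈ C := hv ▸ mem_strongComp_self v
  exact hC.eq_strongComp (hC.mem_of_dreach hvC (dreach_apply ht v))

lemma isLeftZero_genSg_iff (hloop : ∀ u : Fin n, (u, u) ∉ D) {a : Fin n → Fin n} :
    IsLeftZero (genSg D) a ↔ ∀ v, IsSink D (a v) := by
  refine ⟨fun h v w hw => ?_, fun h b hb => funext fun v => (h v).apply_eq hb⟩
  have hav : arcT (a v) w (a v) = a v := congrFun (h _ (arcT_mem_genSg hw)) v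
  simp only [arcT, if_true] at hav
  exact hloop _ (hav ▸ hw)

lemma isRightZero_genSg_iff (hconn : (underlying D).Connected) {a : Fin n → Fin n} :
    IsRightZero (genSg D) a ↔ ∃ t, a = fun _ => t := by
  refine ⟨fun h => ?_, fun ⟨t, ht⟩ _ _ => ht ▸ rfl⟩
  have harc : ∀ p q, (underlying D).Adj p q → a p = a q := by
    rintro p q ⟨-, hpq | hqp⟩
    · simpa [sgMul, arcT] using (congrFun (h _ (arcT_mem_genSg hpq)) p).symm
    · simpa [sgMul, arcT] using congrFun (h _ (arcT_mem_genSg hqp)) q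
  obtain ⟨v⟩ := hconn.nonempty
  refine ⟨a v, funext fun u => ?_⟩
  have := (SimpleGraph.reachable_iff_reflTransGen u v).1 (hconn.preconnected u v)
  simpa [Relation.reflTransGen_eq_self] using this.lift a harc

lemma IsTerminal.isSink_of_mem (hloop : ∀ u : Fin n, (u, u) ∉ D)
    (htriv : ∀ C, IsTerminal D C → ∃ x, C = {x}) {C : Set (Fin n)} (hC : IsTerminal D C)
    {x : Fin n} (hx : x ∈ C) : IsSink D x := by
  obtain ⟨y, rfl⟩ := htriv C hC
  obtain rfl : x = y := hx
  exact (isTerminal_singleton_iff hloop).1 hC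

lemma exists_isLeftZero_genSg_iff (hloop : ∀ u : Fin n, (u, u) ∉ D) (hne : D.Nonempty) :
    (∃ a ∈ genSg D, IsLeftZero (genSg D) a) ↔ ∀ C, IsTerminal D C → ∃ x, C = {x} := by
  constructor
  · rintro ⟨a, ha, hz⟩ C hC
    obtain ⟨w, hw⟩ := hC.1
    have haw : a w ∈ C := hC.mem_of_dreach (hw ▸ mem_strongComp_self w) (dreach_apply ha w)
    exact ⟨a w, (hC.eq_strongComp haw).trans ((isLeftZero_genSg_iff hloop).1 hz w).strongComp_eq⟩
  · intro htriv
    obtain ⟨α, hα, hαT⟩ := exists_mem_genSg_forall_mem hne (T := {x | IsSink D x}) fun u => by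
      obtain ⟨x, hux, hx⟩ := exists_dreach_isTerminal (D := D) u
      exact ⟨x, hx.isSink_of_mem hloop htriv (mem_strongComp_self x), hux⟩
    exact ⟨α, hα, (isLeftZero_genSg_iff hloop).2 hαT⟩

lemma isLeftZero_genSg_iff_forall_mem_isTerminal (hloop : ∀ u : Fin n, (u, u) ∉ D)
    (htriv : ∀ C, IsTerminal D C → ∃ x, C = {x}) {a : Fin n → Fin n} :
    IsLeftZero (genSg D) a ↔ ∀ v, ∃ C, IsTerminal D C ∧ a v ∈ C := by
  rw [isLeftZero_genSg_iff hloop]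
  refine ⟨fun h v => ⟨{a v}, (isTerminal_singleton_iff hloop).2 (h v), rfl⟩, fun h v => ?_⟩
  obtain ⟨C, hC, hav⟩ := h v
  exact hC.isSink_of_mem hloop htriv hav

lemma exists_isRightZero_genSg_iff (hne : D.Nonempty) (hconn : (underlying D).Connected) :
    (∃ a ∈ genSg D, IsRightZero (genSg D) a) ↔ ∃! C, IsTerminal D C := by
  constructor
  · rintro ⟨a, ha, hz⟩
    obtain ⟨t, rfl⟩ := (isRightZero_genSg_iff hconn).1 hz
    obtain ⟨x, -, hx⟩ := exists_dreach_isTerminal (D := D) t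
    exact ⟨_, hx, fun C hC =>
      (hC.eq_strongComp_of_const_mem ha).trans (hx.eq_strongComp_of_const_mem ha).symm⟩
  · rintro ⟨C, hC, huniq⟩
    obtain ⟨v, rfl⟩ := hC.1
    exact ⟨_, const_mem_genSg hne fun C' hC' => huniq C' hC' ▸ mem_strongComp_self v,
      (isRightZero_genSg_iff hconn).2 ⟨v, rfl⟩⟩

lemma isLeftZero_and_isRightZero_genSg_iff (hloop : ∀ u : Fin n, (u, u) ∉ D)
    (hconn : (underlying D).Connected) {a : Fin n → Fin n} :
    IsLeftZero (genSg D) a ∧ IsRightZero (genSg D) a ↔ ∃ t, IsSink D t ∧ a = fun _ => t := by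
  rw [isLeftZero_genSg_iff hloop, isRightZero_genSg_iff hconn]
  constructor
  · rintro ⟨hL, t, rfl⟩
    exact ⟨t, hL hconn.nonempty.some, rfl⟩
  · rintro ⟨t, ht, rfl⟩
    exact ⟨fun _ => ht, t, rfl⟩

lemma exists_zero_genSg_iff (hloop : ∀ u : Fin n, (u, u) ∉ D) (hne : D.Nonempty)
    (hconn : (underlying D).Connected) :
    (∃ a ∈ genSg D, IsLeftZero (genSg D) a ∧ IsRightZero (genSg D) a) ↔
      ∃ x, IsTerminal D {x} ∧ ∀ C, IsTerminal D C → C = {x} := by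
  simp only [isLeftZero_and_isRightZero_genSg_iff hloop hconn]
  constructor
  · rintro ⟨_, ha, t, ht, rfl⟩
    exact ⟨t, (isTerminal_singleton_iff hloop).2 ht,
      fun C hC => (hC.eq_strongComp_of_const_mem ha).trans ht.strongComp_eq⟩
  · rintro ⟨x, hx, huniq⟩
    exact ⟨_, const_mem_genSg hne fun C hC => huniq C hC ▸ rfl,
      x, (isTerminal_singleton_iff hloop).1 hx, rfl⟩

end

/-- Left, right and two-sided zeros of `⟨D⟩` for a connected digraph:
(i) `⟨D⟩` has a left zero iff all terminal components are trivial, and then the left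
zeros are the elements mapping every vertex into a terminal component;
(ii) `⟨D⟩` has a right zero iff `D` has exactly one terminal component, and then the
right zeros are the constant maps;
(iii) `⟨D⟩` has a zero iff `D` has exactly one terminal component and it is trivial,
and then the zero is the constant map onto its vertex. -/
theorem stmt18 (n : ℕ) (D : Set (Fin n × Fin n)) (hloop : ∀ u : Fin n, (u, u) ∉ D)
    (hne : D.Nonempty) (hconn : (underlying D).Connected) :
    ((∃ a ∈ genSg D, IsLeftZero (genSg D) a) ↔
        ∀ C, IsTerminal D C → ∃ x, C = {x}) ∧
    ((∀ C, IsTerminal D C → ∃ x, C = {x}) →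
        ∀ a ∈ genSg D, (IsLeftZero (genSg D) a ↔
          ∀ v, ∃ C, IsTerminal D C ∧ a v ∈ C)) ∧
    ((∃ a ∈ genSg D, IsRightZero (genSg D) a) ↔ (∃! C, IsTerminal D C)) ∧
    ((∃! C, IsTerminal D C) →
        ∀ a ∈ genSg D, (IsRightZero (genSg D) a ↔ ∃ t, a = fun _ => t)) ∧
    ((∃ a ∈ genSg D, IsLeftZero (genSg D) a ∧ IsRightZero (genSg D) a) ↔
        ∃ x, IsTerminal D {x} ∧ ∀ C, IsTerminal D C → C = {x}) ∧
    (∀ x : Fin n, IsTerminal D {x} → (∀ C, IsTerminal D C → C = {x}) →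
        ∀ a ∈ genSg D,
          ((IsLeftZero (genSg D) a ∧ IsRightZero (genSg D) a) ↔ a = fun _ => x)) := by
  refine ⟨exists_isLeftZero_genSg_iff hloop hne,
    fun htriv _ _ => isLeftZero_genSg_iff_forall_mem_isTerminal hloop htriv,
    exists_isRightZero_genSg_iff hne hconn, fun _ _ _ => isRightZero_genSg_iff hconn,
    exists_zero_genSg_iff hloop hne hconn, fun x hx huniq a _ => ?_⟩
  rw [isLeftZero_and_isRightZero_genSg_iff hloop hconn]
  constructor
  · rintro ⟨t, ht, rfl⟩
    obtain rfl : t = x :=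
      Set.singleton_eq_singleton_iff.1 (huniq _ ((isTerminal_singleton_iff hloop).2 ht))
    rfl
  · rintro rfl
    exact ⟨x, (isTerminal_singleton_iff hloop).1 hx, rfl⟩
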